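/- arXiv:2310.13179 — 7 statements merged into one kernel-verified Lean document; each statement's English description precedes it below -/
import Mathlib

section
/- Let q be an integer, R the free ℤ-algebra on non-commuting variables v, x, y₁, y₂, and I the two-sided ideal generated by r₁ = vx - xv, r₂ = vy₁ - y₂v, r₃ = vy₂ - y₁v, r₄ = xy₁ - y₁x + (1-q²)vy₁ - (1-q²)vy₂, r₅ = xy₂ - y₂x - (1-q²)vy₁ + (1-q²)vy₂, r₆ = y₁y₂ - y₂y₁ - (q-1)²(q+1)v²y₁ + (q-1)²(q+1)v²y₂ + (q-1)vxy₁ - (q-1)vxy₂, and r₇ = y₁y₂ + q²(q+1)²v⁴ + q(q²-1)v³x - qv²x² - (q-1)vxy₂ + q(q+1)v²y₁ + (1+q³)v²y₂. Then in R/I we have (y₁ + (1+q)v² + vx)(y₂ + (q²+q³)v² - qvx) = 0. -/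
noncomputable section

/-- The free `ℤ`-algebra on the four non-commuting variables `v, x, y₁, y₂`. -/
abbrev R : Type := FreeAlgebra ℤ (Fin 4)

def v : R := FreeAlgebra.ι ℤ 0
def x : R := FreeAlgebra.ι ℤ 1
def y₁ : R := FreeAlgebra.ι ℤ 2
def y₂ : R := FreeAlgebra.ι ℤ 3

def r₁ : R := v * x - x * v
def r₂ : R := v * y₁ - y₂ * v
def r₃ : R := v * y₂ - y₁ * v
def r₄ (q : ℤ) : R := x * y₁ - y₁ * x + (1 - (q : R) ^ 2) * (v * y₁)
  - (1 - (q : R) ^ 2) * (v * y₂)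
def r₅ (q : ℤ) : R := x * y₂ - y₂ * x - (1 - (q : R) ^ 2) * (v * y₁)
  + (1 - (q : R) ^ 2) * (v * y₂)
def r₆ (q : ℤ) : R := y₁ * y₂ - y₂ * y₁
  - ((q : R) - 1) ^ 2 * ((q : R) + 1) * (v ^ 2 * y₁)
  + ((q : R) - 1) ^ 2 * ((q : R) + 1) * (v ^ 2 * y₂)
  + ((q : R) - 1) * (v * x * y₁) - ((q : R) - 1) * (v * x * y₂)
def r₇ (q : ℤ) : R := y₁ * y₂ + (q : R) ^ 2 * ((q : R) + 1) ^ 2 * v ^ 4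
  + (q : R) * ((q : R) ^ 2 - 1) * (v ^ 3 * x) - (q : R) * (v ^ 2 * x ^ 2)
  - ((q : R) - 1) * (v * x * y₂) + (q : R) * ((q : R) + 1) * (v ^ 2 * y₁)
  + (1 + (q : R) ^ 3) * (v ^ 2 * y₂)

/-- The relation generating the two-sided ideal `I` spanned by `r₁,…,r₇`. -/
def rel (q : ℤ) : R → R → Prop := fun a b =>
  b = 0 ∧ (a = r₁ ∨ a = r₂ ∨ a = r₃ ∨ a = r₄ q ∨ a = r₅ q ∨ a = r₆ q ∨ a = r₇ q)

/-- The quotient `R/I` of the free algebra by the two-sided ideal generated by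
the seven relations: the paramodular Hecke algebra presentation. -/
abbrev H (q : ℤ) : Type := RingQuot (rel q)

/-- The quotient map `R → R/I`. -/
def mk (q : ℤ) : R →ₐ[ℤ] H q := RingQuot.mkAlgHom ℤ (rel q)

lemma mk_eq_zero_of_rel {q : ℤ} {a : R} (h : rel q a 0) : mk q a = 0 := by
  rw [← map_zero (mk q)]
  exact RingQuot.mkAlgHom_rel ℤ h

/- The coefficients come from reducing the expanded product to zero with `r₇` and the
commutation relations `r₁, r₂, r₃, r₅`. -/
theorem zero_divisor_product_eq_relator_combination (q : ℤ) :
    (y₁ + (1 + (q : R)) * v ^ 2 + v * x)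
      * (y₂ + ((q : R) ^ 2 + (q : R) ^ 3) * v ^ 2 - (q : R) * (v * x))
    = r₇ q - ((q : R) ^ 2 + (q : R) ^ 3) * (r₃ * v) + (q : R) * (r₃ * x)
      + (q : R) * (v * r₅ q) - ((q : R) ^ 2 + (q : R) ^ 3) * (v * r₁ * v)
      + (q : R) * (v * r₁ * x) - ((q : R) ^ 2 + (q : R) ^ 3) * (v * r₂)
      - ((q : R) ^ 2 + (q : R) ^ 3) * (v ^ 2 * r₁) := by
  simp only [r₁, r₂, r₃, r₅, r₇]
  simp only [← Int.cast_one (R := R), ← Int.cast_pow, ← Int.cast_add, ← Int.cast_sub,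
    ← Int.cast_mul]
  simp only [← zsmul_eq_mul]
  simp only [mul_add, add_mul, mul_sub, sub_mul, smul_mul_assoc, mul_smul_comm, pow_succ,
    pow_zero, one_mul, mul_assoc]
  module

/-- In `R/I` we have `(y₁ + (1+q)v² + vx)(y₂ + (q²+q³)v² - qvx) = 0`. -/
theorem stmt_3 (q : ℤ) :
    mk q (y₁ + (1 + (q : R)) * v ^ 2 + v * x)
      * mk q (y₂ + ((q : R) ^ 2 + (q : R) ^ 3) * v ^ 2 - (q : R) * (v * x)) = 0 := by
  rw [← map_mul, zero_divisor_product_eq_relator_combination]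
  have h₁ : mk q r₁ = 0 := mk_eq_zero_of_rel ⟨rfl, by tauto⟩
  have h₂ : mk q r₂ = 0 := mk_eq_zero_of_rel ⟨rfl, by tauto⟩
  have h₃ : mk q r₃ = 0 := mk_eq_zero_of_rel ⟨rfl, by tauto⟩
  have h₅ : mk q (r₅ q) = 0 := mk_eq_zero_of_rel ⟨rfl, by tauto⟩
  have h₇ : mk q (r₇ q) = 0 := mk_eq_zero_of_rel ⟨rfl, by tauto⟩
  simp [h₁, h₂, h₃, h₅, h₇]
end
end

section
/- Let q be an integer, R the free ℤ-algebra on non-commuting variables v, x, y₁, y₂, and I the two-sided ideal generated by the seven relations r₁,...,r₇ as in the presentation of the paramodular Hecke algebra. Then the quotient R/I is spanned over ℤ by the images of the monomials v^a x^b y₁^{c₁} y₂^{c₂} with a,b,c₁,c₂ ≥ 0 and c₁c₂ = 0. -/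
/-!
Let `N` be the `ℤ`-span of the normal monomials `v^a x^b y₁^c₁ y₂^c₂` (`c₁ c₂ = 0`) in `R/I`.
Since `N` contains `1`, it suffices that `N` is stable under left multiplication by the four
generators. For `v` and `x` this is immediate, as `v` commutes with `x`. A letter `yᵢ` passes
through `v` by `r₂, r₃` (turning into the other `y`) and through `x` by `r₄, r₅` (at the cost of
terms `v yⱼ`), so it only remains to multiply a pure power of one `y` by the other `y`: there
`r₇` rewrites `y₁ y₂`, and `r₆` followed by `r₇` rewrites `y₂ y₁`, into terms in which the
offending product has one factor fewer, and an induction on the exponent concludes.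
-/

noncomputable section

namespace Paramodular

variable (q : ℤ)

def V : H q := mk q v
def X : H q := mk q x
def Y₁ : H q := mk q y₁
def Y₂ : H q := mk q y₂

def normalSpan : Submodule ℤ (H q) :=
  Submodule.span ℤ {w | ∃ a b c₁ c₂ : ℕ, c₁ * c₂ = 0 ∧
    w = V q ^ a * X q ^ b * Y₁ q ^ c₁ * Y₂ q ^ c₂}

variable {q}

lemma mk_eq_zero_of_rel {a : R} (h : rel q a 0) : mk q a = 0 := by
  simpa [mk] using RingQuot.mkAlgHom_rel ℤ h

lemma x_commute_v : Commute (X q) (V q) := by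
  have h : mk q r₁ = 0 := mk_eq_zero_of_rel ⟨rfl, by tauto⟩
  rw [r₁, map_sub, map_mul, map_mul, sub_eq_zero] at h
  exact h.symm

lemma y₁_mul_v_mul (t : H q) : Y₁ q * (V q * t) = V q * (Y₂ q * t) := by
  have h : mk q r₃ = 0 := mk_eq_zero_of_rel ⟨rfl, by tauto⟩
  rw [r₃, map_sub, map_mul, map_mul, sub_eq_zero] at h
  rw [← mul_assoc, ← mul_assoc]
  exact congrArg (· * t) h.symm

lemma y₂_mul_v_mul (t : H q) : Y₂ q * (V q * t) = V q * (Y₁ q * t) := by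
  have h : mk q r₂ = 0 := mk_eq_zero_of_rel ⟨rfl, by tauto⟩
  rw [r₂, map_sub, map_mul, map_mul, sub_eq_zero] at h
  rw [← mul_assoc, ← mul_assoc]
  exact congrArg (· * t) h.symm

lemma y₁_mul_x_mul (t : H q) : Y₁ q * (X q * t) =
    X q * (Y₁ q * t) + (1 - q ^ 2) • (V q * (Y₁ q * t)) - (1 - q ^ 2) • (V q * (Y₂ q * t)) := by
  have h : mk q (r₄ q) = 0 := mk_eq_zero_of_rel ⟨rfl, by tauto⟩
  simp only [r₄, map_sub, map_add, map_mul, map_pow, map_intCast, map_one] at h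
  simp only [V, X, Y₁, Y₂, zsmul_eq_mul]
  push_cast
  linear_combination (norm := (simp only [add_mul, sub_mul, mul_assoc]; noncomm_ring)) -h * t

lemma y₂_mul_x_mul (t : H q) : Y₂ q * (X q * t) =
    X q * (Y₂ q * t) - (1 - q ^ 2) • (V q * (Y₁ q * t)) + (1 - q ^ 2) • (V q * (Y₂ q * t)) := by
  have h : mk q (r₅ q) = 0 := mk_eq_zero_of_rel ⟨rfl, by tauto⟩
  simp only [r₅, map_sub, map_add, map_mul, map_pow, map_intCast, map_one] at h
  simp only [V, X, Y₁, Y₂, zsmul_eq_mul]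
  push_cast
  linear_combination (norm := (simp only [add_mul, sub_mul, mul_assoc]; noncomm_ring)) -h * t

lemma y₂_mul_y₁_mul (t : H q) : Y₂ q * (Y₁ q * t) = Y₁ q * (Y₂ q * t)
    - ((q - 1) ^ 2 * (q + 1)) • (V q * (V q * (Y₁ q * t)))
    + ((q - 1) ^ 2 * (q + 1)) • (V q * (V q * (Y₂ q * t)))
    + (q - 1) • (V q * (X q * (Y₁ q * t))) - (q - 1) • (V q * (X q * (Y₂ q * t))) := by
  have h : mk q (r₆ q) = 0 := mk_eq_zero_of_rel ⟨rfl, by tauto⟩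
  simp only [r₆, map_sub, map_add, map_mul, map_pow, map_intCast, map_one] at h
  simp only [V, X, Y₁, Y₂, zsmul_eq_mul]
  push_cast
  linear_combination (norm := (simp only [add_mul, sub_mul, mul_assoc, pow_two]; noncomm_ring))
    -h * t

lemma y₁_mul_y₂_mul (t : H q) : Y₁ q * (Y₂ q * t) =
    -((q ^ 2 * (q + 1) ^ 2) • (V q * (V q * (V q * (V q * t)))))
    - (q * (q ^ 2 - 1)) • (V q * (V q * (V q * (X q * t))))
    + q • (V q * (V q * (X q * (X q * t))))
    + (q - 1) • (V q * (X q * (Y₂ q * t)))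
    - (q * (q + 1)) • (V q * (V q * (Y₁ q * t)))
    - (1 + q ^ 3) • (V q * (V q * (Y₂ q * t))) := by
  have h : mk q (r₇ q) = 0 := mk_eq_zero_of_rel ⟨rfl, by tauto⟩
  simp only [r₇, map_sub, map_add, map_mul, map_pow, map_intCast, map_one] at h
  simp only [V, X, Y₁, Y₂, zsmul_eq_mul]
  push_cast
  linear_combination
    (norm := (simp only [add_mul, sub_mul, mul_assoc, pow_succ, pow_zero, one_mul]; noncomm_ring))
    h * t

lemma monomial_mem (a b c₁ c₂ : ℕ) (h : c₁ * c₂ = 0) :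
    V q ^ a * X q ^ b * Y₁ q ^ c₁ * Y₂ q ^ c₂ ∈ normalSpan q :=
  Submodule.subset_span ⟨a, b, c₁, c₂, h, rfl⟩

lemma mul_mem_normalSpan {g z : H q}
    (hg : ∀ a b c₁ c₂ : ℕ, c₁ * c₂ = 0 →
      g * (V q ^ a * X q ^ b * Y₁ q ^ c₁ * Y₂ q ^ c₂) ∈ normalSpan q)
    (hz : z ∈ normalSpan q) : g * z ∈ normalSpan q := by
  refine (Submodule.span_le (p := (normalSpan q).comap (LinearMap.mulLeft ℤ g))).mpr ?_ hz
  rintro _ ⟨a, b, c₁, c₂, h, rfl⟩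
  exact hg a b c₁ c₂ h

lemma y₁_pow_mem (c : ℕ) : Y₁ q ^ c ∈ normalSpan q := by
  simpa using monomial_mem (q := q) 0 0 c 0 (mul_zero c)

lemma y₂_pow_mem (c : ℕ) : Y₂ q ^ c ∈ normalSpan q := by
  simpa using monomial_mem (q := q) 0 0 0 c (zero_mul c)

lemma v_mul_mem {z : H q} (hz : z ∈ normalSpan q) : V q * z ∈ normalSpan q := by
  refine mul_mem_normalSpan (fun a b c₁ c₂ h => ?_) hz
  convert monomial_mem (a + 1) b c₁ c₂ h using 1
  simp only [pow_succ', mul_assoc]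

lemma x_mul_mem {z : H q} (hz : z ∈ normalSpan q) : X q * z ∈ normalSpan q := by
  refine mul_mem_normalSpan (fun a b c₁ c₂ h => ?_) hz
  convert monomial_mem a (b + 1) c₁ c₂ h using 1
  simp only [pow_succ', mul_assoc]
  rw [← mul_assoc (X q), (x_commute_v.pow_right a).eq, mul_assoc]

lemma y₁_mul_y₂_pow_mem (m : ℕ) : Y₁ q * Y₂ q ^ m ∈ normalSpan q := by
  induction m with
  | zero => simpa using y₁_pow_mem (q := q) 1
  | succ m ih =>
    rw [pow_succ', y₁_mul_y₂_mul, ← pow_succ']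
    apply_rules (maxDepth := 100) [add_mem, sub_mem, neg_mem, Submodule.smul_mem, v_mul_mem,
      x_mul_mem, y₂_pow_mem, ih]

lemma y₂_mul_y₁_pow_mem (k : ℕ) : Y₂ q * Y₁ q ^ k ∈ normalSpan q := by
  induction k with
  | zero => simpa using y₂_pow_mem (q := q) 1
  | succ k ih =>
    rw [pow_succ', y₂_mul_y₁_mul, y₁_mul_y₂_mul, ← pow_succ']
    apply_rules (maxDepth := 100) [add_mem, sub_mem, neg_mem, Submodule.smul_mem, v_mul_mem,
      x_mul_mem, y₁_pow_mem, ih]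

lemma y_mul_x_pow_mul_mem (b : ℕ) {c₁ c₂ : ℕ} (h : c₁ * c₂ = 0) :
    Y₁ q * (X q ^ b * (Y₁ q ^ c₁ * Y₂ q ^ c₂)) ∈ normalSpan q ∧
      Y₂ q * (X q ^ b * (Y₁ q ^ c₁ * Y₂ q ^ c₂)) ∈ normalSpan q := by
  induction b with
  | zero =>
    rcases Nat.mul_eq_zero.mp h with rfl | rfl
    · simpa [← pow_succ'] using ⟨y₁_mul_y₂_pow_mem c₂, y₂_pow_mem (q := q) (c₂ + 1)⟩
    · simpa [← pow_succ'] using ⟨y₁_pow_mem (q := q) (c₁ + 1), y₂_mul_y₁_pow_mem c₁⟩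
  | succ b ih =>
    rw [pow_succ', mul_assoc, y₁_mul_x_mul, y₂_mul_x_mul]
    constructor <;> apply_rules [add_mem, sub_mem, Submodule.smul_mem, v_mul_mem, x_mul_mem,
      ih.1, ih.2]

lemma y_mul_v_mul_mem {z : H q}
    (hz : Y₁ q * z ∈ normalSpan q ∧ Y₂ q * z ∈ normalSpan q) :
    Y₁ q * (V q * z) ∈ normalSpan q ∧ Y₂ q * (V q * z) ∈ normalSpan q := by
  rw [y₁_mul_v_mul, y₂_mul_v_mul]
  exact ⟨v_mul_mem hz.2, v_mul_mem hz.1⟩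

lemma y_mul_monomial_mem {a b c₁ c₂ : ℕ} (h : c₁ * c₂ = 0) :
    Y₁ q * (V q ^ a * X q ^ b * Y₁ q ^ c₁ * Y₂ q ^ c₂) ∈ normalSpan q ∧
      Y₂ q * (V q ^ a * X q ^ b * Y₁ q ^ c₁ * Y₂ q ^ c₂) ∈ normalSpan q := by
  simp only [mul_assoc]
  induction a with
  | zero => simpa using y_mul_x_pow_mul_mem b h
  | succ a ih => simpa only [pow_succ', mul_assoc] using y_mul_v_mul_mem ih

lemma y₁_mul_mem {z : H q} (hz : z ∈ normalSpan q) : Y₁ q * z ∈ normalSpan q :=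
  mul_mem_normalSpan (fun _ _ _ _ h => (y_mul_monomial_mem h).1) hz

lemma y₂_mul_mem {z : H q} (hz : z ∈ normalSpan q) : Y₂ q * z ∈ normalSpan q :=
  mul_mem_normalSpan (fun _ _ _ _ h => (y_mul_monomial_mem h).2) hz

lemma mk_mul_mem (r : R) {z : H q} (hz : z ∈ normalSpan q) : mk q r * z ∈ normalSpan q := by
  induction r using FreeAlgebra.induction generalizing z with
  | grade0 c =>
    rw [AlgHom.commutes, ← Algebra.smul_def]
    exact Submodule.smul_mem _ c hz
  | grade1 i =>
    fin_cases i
    exacts [v_mul_mem hz, x_mul_mem hz, y₁_mul_mem hz, y₂_mul_mem hz]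
  | mul r s hr hs => rw [map_mul, mul_assoc]; exact hr (hs hz)
  | add r s hr hs => rw [map_add, add_mul]; exact add_mem (hr hz) (hs hz)

theorem normalSpan_eq_top : normalSpan q = ⊤ := by
  refine eq_top_iff.mpr fun z _ => ?_
  obtain ⟨r, rfl⟩ : ∃ r, mk q r = z := RingQuot.mkAlgHom_surjective ℤ (rel q) z
  simpa using mk_mul_mem r (monomial_mem (q := q) 0 0 0 0 rfl)

end Paramodular

/-- `R/I` is spanned over `ℤ` by the images of the monomials
`v^a x^b y₁^{c₁} y₂^{c₂}` with `c₁ c₂ = 0`. -/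
theorem stmt_4 (q : ℤ) (z : H q) :
    z ∈ Submodule.span ℤ {w : H q | ∃ a b c₁ c₂ : ℕ, c₁ * c₂ = 0 ∧
      w = mk q (v ^ a * x ^ b * y₁ ^ c₁ * y₂ ^ c₂)} := by
  simp only [map_mul, map_pow]
  exact Paramodular.normalSpan_eq_top.ge (Submodule.mem_top (x := z))
end
end

section
/- Let q be an integer and let ε ∈ ℂ*, λ ∈ ℂ, and set μ = -(1+q)ε² - ελ. Then the ℂ-algebra homomorphism η from the free ℤ-algebra on v, x, y₁, y₂ to ℂ determined by η(v)=ε, η(x)=λ, η(y₁)=η(y₂)=μ annihilates all seven relations r₁,...,r₇ of the paramodular Hecke algebra presentation. -/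
/-!
A homomorphism to a commutative ring kills the commutator parts of all relations, and once
`η y₁ = η y₂` the remaining terms of `r₂, …, r₆` cancel in pairs. The image of `r₇` is then a
quadratic in `μ = η y₁` that factors as `(μ + (1+q)ε² + ελ)(μ + qε((q²+q)ε - λ))`, and the choice
of `μ` makes the first factor vanish.
-/
noncomputable section

section Characters

variable {A : Type*} [CommRing A] (q : ℤ) (η : R →ₐ[ℤ] A)

theorem map_r₁_to_r₆_eq_zero_of_map_y₁_eq_map_y₂ (h : η y₁ = η y₂) :
    η r₁ = 0 ∧ η r₂ = 0 ∧ η r₃ = 0 ∧ η (r₄ q) = 0 ∧ η (r₅ q) = 0 ∧ η (r₆ q) = 0 := by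
  simp only [r₁, r₂, r₃, r₄, r₅, r₆, map_sub, map_add, map_mul, map_pow, map_intCast, map_one, h]
  refine ⟨by ring, by ring, by ring, by ring, by ring, by ring⟩

theorem map_r₇_of_map_y₁_eq_map_y₂ (h : η y₁ = η y₂) :
    η (r₇ q) = (η y₁ + (1 + q) * η v ^ 2 + η v * η x) *
      (η y₁ + q * η v * ((q ^ 2 + q) * η v - η x)) := by
  simp only [r₇, map_sub, map_add, map_mul, map_pow, map_intCast, map_one, ← h]
  ring

end Characters

theorem stmt_6_general (q : ℤ) (ε lam : ℂ)
    (μ : ℂ) (hμ : μ = -(1 + (q : ℂ)) * ε ^ 2 - ε * lam) :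
    letI η : R →ₐ[ℤ] ℂ := FreeAlgebra.lift ℤ ![ε, lam, μ, μ]
    η r₁ = 0 ∧ η r₂ = 0 ∧ η r₃ = 0 ∧ η (r₄ q) = 0 ∧ η (r₅ q) = 0 ∧
      η (r₆ q) = 0 ∧ η (r₇ q) = 0 := by
  set η : R →ₐ[ℤ] ℂ := FreeAlgebra.lift ℤ ![ε, lam, μ, μ]
  have hv : η v = ε := FreeAlgebra.lift_ι_apply _ _
  have hx : η x = lam := FreeAlgebra.lift_ι_apply _ _
  have hy₁ : η y₁ = μ := FreeAlgebra.lift_ι_apply _ _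
  have hy₂ : η y₂ = μ := FreeAlgebra.lift_ι_apply _ _
  have hy : η y₁ = η y₂ := hy₁.trans hy₂.symm
  have h₇ : η (r₇ q) = 0 := by
    rw [map_r₇_of_map_y₁_eq_map_y₂ q η hy, hv, hx, hy₁, hμ]
    ring
  obtain ⟨h₁, h₂, h₃, h₄, h₅, h₆⟩ := map_r₁_to_r₆_eq_zero_of_map_y₁_eq_map_y₂ q η hy
  exact ⟨h₁, h₂, h₃, h₄, h₅, h₆, h₇⟩

/-- For `ε ≠ 0`, `μ = -(1+q)ε² - ελ`, the homomorphism `η` from the free algebra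
to `ℂ` with `η(v)=ε, η(x)=λ, η(y₁)=η(y₂)=μ` annihilates all seven relations. -/
theorem stmt_6 (q : ℤ) (ε lam : ℂ) (hε : ε ≠ 0)
    (μ : ℂ) (hμ : μ = -(1 + (q : ℂ)) * ε ^ 2 - ε * lam) :
    letI η : R →ₐ[ℤ] ℂ := FreeAlgebra.lift ℤ ![ε, lam, μ, μ]
    η r₁ = 0 ∧ η r₂ = 0 ∧ η r₃ = 0 ∧ η (r₄ q) = 0 ∧ η (r₅ q) = 0 ∧
      η (r₆ q) = 0 ∧ η (r₇ q) = 0 :=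
  stmt_6_general q ε lam μ hμ
end
end

section
/- Let q be an integer and let ε ∈ ℂ*, λ ∈ ℂ, and set μ = -(q²+q³)ε² + qελ. Then the ℂ-algebra homomorphism η from the free ℤ-algebra on v, x, y₁, y₂ to ℂ determined by η(v)=ε, η(x)=λ, η(y₁)=η(y₂)=μ annihilates all seven relations r₁,...,r₇ of the paramodular Hecke algebra presentation. -/
noncomputable section

section Characters

variable {A : Type*} [CommRing A]

theorem map_r₁_eq_zero (φ : R →ₐ[ℤ] A) : φ r₁ = 0 := by
  rw [r₁, map_sub, map_mul, map_mul, mul_comm, sub_self]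

variable {φ : R →ₐ[ℤ] A} (hy : φ y₁ = φ y₂)
include hy

theorem map_r₂_eq_zero : φ r₂ = 0 := by
  rw [r₂, map_sub, map_mul, map_mul, hy, mul_comm, sub_self]

theorem map_r₃_eq_zero : φ r₃ = 0 := by
  rw [r₃, map_sub, map_mul, map_mul, hy, mul_comm, sub_self]

theorem map_r₄_eq_zero (q : ℤ) : φ (r₄ q) = 0 := by
  simp only [r₄, map_sub, map_add, map_mul, map_pow, map_one, map_intCast, hy]
  ring

theorem map_r₅_eq_zero (q : ℤ) : φ (r₅ q) = 0 := by
  simp only [r₅, map_sub, map_add, map_mul, map_pow, map_one, map_intCast, hy]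
  ring

theorem map_r₆_eq_zero (q : ℤ) : φ (r₆ q) = 0 := by
  simp only [r₆, map_sub, map_add, map_mul, map_pow, map_one, map_intCast, hy]
  ring

/-- Under `φ`, `r₇` is a quadratic in the common value of `y₁, y₂`, and `μ` is one of its roots. -/
theorem map_r₇_eq_mul (q : ℤ) : φ (r₇ q) =
    (φ y₁ - (-((q : A) ^ 2 + (q : A) ^ 3) * φ v ^ 2 + q * φ v * φ x)) *
      (φ y₁ + φ v * φ x + (1 + q) * φ v ^ 2) := by
  simp only [r₇, map_sub, map_add, map_mul, map_pow, map_one, map_intCast, ← hy]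
  ring

end Characters

theorem stmt_7_general (q : ℤ) (ε lam : ℂ)
    (μ : ℂ) (hμ : μ = -((q : ℂ) ^ 2 + (q : ℂ) ^ 3) * ε ^ 2 + (q : ℂ) * ε * lam) :
    letI η : R →ₐ[ℤ] ℂ := FreeAlgebra.lift ℤ ![ε, lam, μ, μ]
    η r₁ = 0 ∧ η r₂ = 0 ∧ η r₃ = 0 ∧ η (r₄ q) = 0 ∧ η (r₅ q) = 0 ∧
      η (r₆ q) = 0 ∧ η (r₇ q) = 0 := by
  set η : R →ₐ[ℤ] ℂ := FreeAlgebra.lift ℤ ![ε, lam, μ, μ]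
  have hv : η v = ε := FreeAlgebra.lift_ι_apply _ _
  have hx : η x = lam := FreeAlgebra.lift_ι_apply _ _
  have hy₁ : η y₁ = μ := FreeAlgebra.lift_ι_apply _ _
  have hy₂ : η y₂ = μ := FreeAlgebra.lift_ι_apply _ _
  have hy : η y₁ = η y₂ := hy₁.trans hy₂.symm
  refine ⟨map_r₁_eq_zero η, map_r₂_eq_zero hy, map_r₃_eq_zero hy, map_r₄_eq_zero hy q,
    map_r₅_eq_zero hy q, map_r₆_eq_zero hy q, ?_⟩
  rw [map_r₇_eq_mul hy, hv, hx, hy₁, ← hμ, sub_self, zero_mul]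

/-- For `ε ≠ 0`, `μ = -(q²+q³)ε² + qελ`, the homomorphism `η` from the free
algebra to `ℂ` with `η(v)=ε, η(x)=λ, η(y₁)=η(y₂)=μ` annihilates all seven
relations. -/
theorem stmt_7 (q : ℤ) (ε lam : ℂ) (hε : ε ≠ 0)
    (μ : ℂ) (hμ : μ = -((q : ℂ) ^ 2 + (q : ℂ) ^ 3) * ε ^ 2 + (q : ℂ) * ε * lam) :
    letI η : R →ₐ[ℤ] ℂ := FreeAlgebra.lift ℤ ![ε, lam, μ, μ]
    η r₁ = 0 ∧ η r₂ = 0 ∧ η r₃ = 0 ∧ η (r₄ q) = 0 ∧ η (r₅ q) = 0 ∧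
      η (r₆ q) = 0 ∧ η (r₇ q) = 0 :=
  stmt_7_general q ε lam μ hμ
end
end

section
/- Let q be an integer, R the free ℤ-algebra on v, x, y₁, y₂ and I the two-sided ideal generated by the seven relations r₁,...,r₇ of the paramodular Hecke algebra. Then in R/I, the element z₁ = x - (q²-1)v commutes with each of v, x, y₁, and y₂. -/
noncomputable section

/-
Modulo `r₁`, `r₂`, `r₃` the generator `v` commutes with `x` and conjugates `y₁` into `y₂`, so
`[v, y₁] = v y₁ - v y₂` and `[v, y₂] = v y₂ - v y₁`. Relations `r₄` and `r₅` say that `[x, yᵢ]` is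
`(q² - 1)` times the same expressions, hence `x - (q² - 1) v` commutes with `y₁` and `y₂`; it
commutes with `v` and `x` by `r₁` alone.
-/

lemma commute_sub_mul_of_commutator_eq {A : Type*} [Ring A] {a b c d : A} (hcb : Commute c b)
    (h : a * b - b * a = c * (d * b - b * d)) : Commute (a - c * d) b := by
  rw [Commute, SemiconjBy, ← sub_eq_zero]
  calc (a - c * d) * b - b * (a - c * d) = a * b - b * a - c * (d * b - b * d) := by
        rw [sub_mul, mul_sub, mul_sub, ← mul_assoc b c d, ← hcb.eq, mul_assoc, mul_assoc]; abel
    _ = 0 := by rw [h, sub_self]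

namespace ParamodularHecke

variable (q : ℤ)

lemma mk_eq_zero_of_rel {a : R} (h : rel q a 0) : mk q a = 0 := by
  simpa [mk] using RingQuot.mkAlgHom_rel ℤ h

lemma commute_v_x : Commute (mk q v) (mk q x) := by
  have h := mk_eq_zero_of_rel q (a := r₁) ⟨rfl, by tauto⟩
  rwa [r₁, map_sub, map_mul, map_mul, sub_eq_zero] at h

lemma v_mul_y₁ : mk q v * mk q y₁ = mk q y₂ * mk q v := by
  have h := mk_eq_zero_of_rel q (a := r₂) ⟨rfl, by tauto⟩
  rwa [r₂, map_sub, map_mul, map_mul, sub_eq_zero] at h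

lemma v_mul_y₂ : mk q v * mk q y₂ = mk q y₁ * mk q v := by
  have h := mk_eq_zero_of_rel q (a := r₃) ⟨rfl, by tauto⟩
  rwa [r₃, map_sub, map_mul, map_mul, sub_eq_zero] at h

lemma x_mul_y₁_sub_y₁_mul_x : mk q x * mk q y₁ - mk q y₁ * mk q x
    = ((q : H q) ^ 2 - 1) * (mk q v * mk q y₁ - mk q v * mk q y₂) := by
  have h := mk_eq_zero_of_rel q (a := r₄ q) ⟨rfl, by tauto⟩
  simp only [r₄, map_add, map_sub, map_mul, map_pow, map_one, map_intCast] at h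
  rw [← sub_eq_zero, ← h]
  simp only [sub_mul, mul_sub, one_mul]
  abel

lemma x_mul_y₂_sub_y₂_mul_x : mk q x * mk q y₂ - mk q y₂ * mk q x
    = ((q : H q) ^ 2 - 1) * (mk q v * mk q y₂ - mk q v * mk q y₁) := by
  have h := mk_eq_zero_of_rel q (a := r₅ q) ⟨rfl, by tauto⟩
  simp only [r₅, map_add, map_sub, map_mul, map_pow, map_one, map_intCast] at h
  rw [← sub_eq_zero, ← h]
  simp only [sub_mul, mul_sub, one_mul]
  abel

lemma commute_intCast_sq_sub_one (a : H q) : Commute ((q : H q) ^ 2 - 1) a :=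
  ((Int.cast_commute q a).pow_left 2).sub_left (Commute.one_left a)

end ParamodularHecke

open ParamodularHecke in
/-- In `R/I` the element `z₁ = x - (q²-1)v` commutes with `v, x, y₁, y₂`. -/
theorem stmt_8 (q : ℤ) :
    mk q (x - ((q : R) ^ 2 - 1) * v) * mk q v = mk q v * mk q (x - ((q : R) ^ 2 - 1) * v) ∧
    mk q (x - ((q : R) ^ 2 - 1) * v) * mk q x = mk q x * mk q (x - ((q : R) ^ 2 - 1) * v) ∧
    mk q (x - ((q : R) ^ 2 - 1) * v) * mk q y₁ = mk q y₁ * mk q (x - ((q : R) ^ 2 - 1) * v) ∧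
    mk q (x - ((q : R) ^ 2 - 1) * v) * mk q y₂ = mk q y₂ * mk q (x - ((q : R) ^ 2 - 1) * v) := by
  have hz : mk q (x - ((q : R) ^ 2 - 1) * v) = mk q x - ((q : H q) ^ 2 - 1) * mk q v := by
    simp only [map_sub, map_mul, map_pow, map_one, map_intCast]
  have hc := commute_intCast_sq_sub_one q
  simp only [hz]
  refine ⟨?_, ?_, ?_, ?_⟩
  · exact (commute_v_x q).symm.sub_left ((hc _).mul_left (Commute.refl _))
  · exact (Commute.refl _).sub_left ((hc _).mul_left (commute_v_x q))
  · refine commute_sub_mul_of_commutator_eq (hc _) ?_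
    rw [x_mul_y₁_sub_y₁_mul_x, v_mul_y₂]
  · refine commute_sub_mul_of_commutator_eq (hc _) ?_
    rw [x_mul_y₂_sub_y₂_mul_x, v_mul_y₁]
end
end

section
/- Let q be an integer with q ≥ 2. Define the sequence c(k) for k ≥ 0 by c(0)=1, c(1)=1+q+2q²+q³, c(2)=1+q+2q²+3q³+3q⁴+2q⁵+q⁶, and the recurrence c(k+3) = (1+q²+q³)c(k+2) - (q²+q³+q⁵)c(k+1) + q⁵c(k) for k ≥ 0. Then c(k) = (1 + q² - 2q^{2k+1}(1+q+q²) + q^{3k+1}(1+q+q²+q³)) / ((q-1)²(1+q+q²)) for all k ≥ 0. -/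
/-! The characteristic polynomial of the recurrence factors as `(t - 1)(t - q²)(t - q³)`,
so the solution space is spanned by `1`, `q^(2k)` and `q^(3k)`; the closed form is the
combination of these matching `c 0`, `c 1`, `c 2`. -/

namespace LinearRecurrence

variable {R : Type*} [CommRing R]

def ofRoots₃ (a b c : R) : LinearRecurrence R :=
  ⟨3, ![a * b * c, -(a * b + b * c + c * a), a + b + c]⟩

@[simp]
theorem ofRoots₃_order (a b c : R) : (ofRoots₃ a b c).order = 3 := rfl

theorem ofRoots₃_isSolution_iff (a b c : R) (u : ℕ → R) :
    (ofRoots₃ a b c).IsSolution u ↔ ∀ k, u (k + 3) =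
      (a + b + c) * u (k + 2) - (a * b + b * c + c * a) * u (k + 1) + a * b * c * u k := by
  refine forall_congr' fun k => Eq.congr_right ?_
  change ∑ i : Fin 3, ![a * b * c, -(a * b + b * c + c * a), a + b + c] i * u (k + i) = _
  simp only [Fin.sum_univ_three, Fin.isValue, Matrix.cons_val_zero, Matrix.cons_val_one,
    Matrix.cons_val, Fin.coe_ofNat_eq_mod, Nat.zero_mod, Nat.one_mod, Nat.mod_succ, add_zero]
  ring

theorem ofRoots₃_isSolution_geom_combination (a b c x y z : R) :
    (ofRoots₃ a b c).IsSolution fun k => x * a ^ k + y * b ^ k + z * c ^ k := by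
  rw [ofRoots₃_isSolution_iff]
  intro k
  ring

end LinearRecurrence

open LinearRecurrence in
/-- The sequence defined by the stated initial values and three-term recurrence
has the stated closed form. -/
theorem stmt_14 (q : ℤ) (hq : 2 ≤ q) (c : ℕ → ℚ)
    (h0 : c 0 = 1)
    (h1 : c 1 = 1 + (q : ℚ) + 2 * (q : ℚ) ^ 2 + (q : ℚ) ^ 3)
    (h2 : c 2 = 1 + (q : ℚ) + 2 * (q : ℚ) ^ 2 + 3 * (q : ℚ) ^ 3 + 3 * (q : ℚ) ^ 4
      + 2 * (q : ℚ) ^ 5 + (q : ℚ) ^ 6)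
    (hrec : ∀ k : ℕ, c (k + 3) = (1 + (q : ℚ) ^ 2 + (q : ℚ) ^ 3) * c (k + 2)
      - ((q : ℚ) ^ 2 + (q : ℚ) ^ 3 + (q : ℚ) ^ 5) * c (k + 1) + (q : ℚ) ^ 5 * c k) :
    ∀ k : ℕ, c k =
      (1 + (q : ℚ) ^ 2 - 2 * (q : ℚ) ^ (2 * k + 1) * (1 + (q : ℚ) + (q : ℚ) ^ 2)
        + (q : ℚ) ^ (3 * k + 1) * (1 + (q : ℚ) + (q : ℚ) ^ 2 + (q : ℚ) ^ 3))
        / (((q : ℚ) - 1) ^ 2 * (1 + (q : ℚ) + (q : ℚ) ^ 2)) := by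
  have hQ : (2 : ℚ) ≤ q := by exact_mod_cast hq
  set Q : ℚ := (q : ℚ)
  have hQ₁ : Q - 1 ≠ 0 := by linarith
  have hQ₂ : 1 + Q + Q ^ 2 ≠ 0 := by nlinarith
  have hc : (ofRoots₃ 1 (Q ^ 2) (Q ^ 3)).IsSolution c := by
    rw [ofRoots₃_isSolution_iff]
    intro k
    rw [hrec]
    ring
  have hc_eq : c = fun k => (1 + Q ^ 2) / ((Q - 1) ^ 2 * (1 + Q + Q ^ 2)) * 1 ^ k
      + -2 * Q / (Q - 1) ^ 2 * (Q ^ 2) ^ k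
      + Q * (1 + Q + Q ^ 2 + Q ^ 3) / ((Q - 1) ^ 2 * (1 + Q + Q ^ 2)) * (Q ^ 3) ^ k := by
    rw [eq_iff_eqOn_range_order _ _ _ hc (ofRoots₃_isSolution_geom_combination _ _ _ _ _ _)]
    intro n hn
    simp only [ofRoots₃_order, Finset.coe_range, Set.mem_Iio] at hn
    interval_cases n <;> simp only [h0, h1, h2] <;> field_simp <;> ring
  intro k
  rw [congrFun hc_eq k]
  field_simp
  ring
end

section
/- Let q ≥ 2 be an integer and consider the graded free ℤ-algebra on v, x (degree 1) and y₁, y₂ (degree 2), modulo the seven relations r₁,...,r₇ of the paramodular Hecke algebra presentation. Then the images of v and y₁ do not commute in the quotient; in particular the quotient algebra is non-commutative. -/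
noncomputable section

/-! The quotient acts on the free `ℤ`-module with basis `1, v, x, y₁, y₂, w₁, w₂`, a truncation
of the algebra in degrees `≤ 3` in which `w₁ = v y₁ = y₂ v`, `w₂ = v y₂ = y₁ v`,
`x y₁ = (q² - 1)(w₁ - w₂) = -x y₂`, and every other product of two of `v, x, y₁, y₂, w₁, w₂`
vanishes. The generators act by left multiplication. `r₂`–`r₅` hold by construction, and `r₁`,
`r₆`, `r₇` hold because each of their monomials acts as zero. Applied to `1`, `v y₁` gives `w₁`
but `y₁ v` gives `w₂`. -/

namespace Truncation

open Matrix

abbrev M : Type := Matrix (Fin 7) (Fin 7) ℤ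

def V : M := single 1 0 1 + single 5 3 1 + single 6 4 1
def X (q : ℤ) : M := single 2 0 1 + single 5 3 (q ^ 2 - 1) + single 5 4 (1 - q ^ 2)
  + single 6 3 (1 - q ^ 2) + single 6 4 (q ^ 2 - 1)
def Y₁ : M := single 3 0 1 + single 6 1 1
def Y₂ : M := single 4 0 1 + single 5 1 1

lemma V_mul_V : V * V = 0 := by simp [V, add_mul, mul_add]
lemma V_mul_Y₁ : V * Y₁ = single 5 0 1 := by simp [V, Y₁, add_mul, mul_add]
lemma V_mul_Y₂ : V * Y₂ = single 6 0 1 := by simp [V, Y₂, add_mul, mul_add]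
lemma Y₁_mul_V : Y₁ * V = single 6 0 1 := by simp [V, Y₁, add_mul, mul_add]
lemma Y₂_mul_V : Y₂ * V = single 5 0 1 := by simp [V, Y₂, add_mul, mul_add]
lemma Y₁_mul_Y₂ : Y₁ * Y₂ = 0 := by simp [Y₁, Y₂, add_mul, mul_add]
lemma Y₂_mul_Y₁ : Y₂ * Y₁ = 0 := by simp [Y₁, Y₂, add_mul, mul_add]

lemma V_pow_of_two_le {n : ℕ} (hn : 2 ≤ n) : V ^ n = 0 := by
  obtain ⟨k, rfl⟩ := Nat.exists_eq_add_of_le' hn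
  rw [pow_add, sq, V_mul_V, mul_zero]

section

variable (q : ℤ)

lemma V_mul_X : V * X q = 0 := by simp [V, X, add_mul, mul_add]
lemma X_mul_V : X q * V = 0 := by simp [V, X, add_mul, mul_add]
lemma Y₁_mul_X : Y₁ * X q = 0 := by simp [Y₁, X, add_mul, mul_add]
lemma Y₂_mul_X : Y₂ * X q = 0 := by simp [Y₂, X, add_mul, mul_add]

lemma X_mul_Y₁ : X q * Y₁ = (q ^ 2 - 1) • (V * Y₁ - V * Y₂) := by
  rw [V_mul_Y₁, V_mul_Y₂]
  ext i j
  simp [X, Y₁, add_mul, mul_add, single_apply]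
  split_ifs <;> ring

lemma X_mul_Y₂ : X q * Y₂ = (q ^ 2 - 1) • (V * Y₂ - V * Y₁) := by
  rw [V_mul_Y₁, V_mul_Y₂]
  ext i j
  simp [X, Y₂, add_mul, mul_add, single_apply]
  split_ifs <;> ring

def freeRep : R →ₐ[ℤ] M := FreeAlgebra.lift ℤ ![V, X q, Y₁, Y₂]

@[simp] lemma freeRep_v : freeRep q v = V := by simp [freeRep, v]
@[simp] lemma freeRep_x : freeRep q x = X q := by simp [freeRep, x]
@[simp] lemma freeRep_y₁ : freeRep q y₁ = Y₁ := by simp [freeRep, y₁]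
@[simp] lemma freeRep_y₂ : freeRep q y₂ = Y₂ := by simp [freeRep, y₂]

lemma freeRep_rel {a b : R} (h : rel q a b) : freeRep q a = freeRep q b := by
  obtain ⟨rfl, rfl | rfl | rfl | rfl | rfl | rfl | rfl⟩ := h <;> rw [map_zero]
  · simp [r₁, V_mul_X, X_mul_V]
  · simp [r₂, V_mul_Y₁, Y₂_mul_V]
  · simp [r₃, V_mul_Y₂, Y₁_mul_V]
  · simp only [r₄, map_sub, map_add, map_mul, map_one, map_pow, map_intCast, freeRep_v,
      freeRep_x, freeRep_y₁, freeRep_y₂, X_mul_Y₁, Y₁_mul_X, zsmul_eq_mul]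
    push_cast
    noncomm_ring
  · simp only [r₅, map_sub, map_add, map_mul, map_one, map_pow, map_intCast, freeRep_v,
      freeRep_x, freeRep_y₁, freeRep_y₂, X_mul_Y₂, Y₂_mul_X, zsmul_eq_mul]
    push_cast
    noncomm_ring
  · simp [r₆, Y₁_mul_Y₂, Y₂_mul_Y₁, V_pow_of_two_le, V_mul_X]
  · simp [r₇, Y₁_mul_Y₂, V_pow_of_two_le, V_mul_X]

def rep : H q →ₐ[ℤ] M := RingQuot.liftAlgHom ℤ ⟨freeRep q, fun _ _ ↦ freeRep_rel q⟩

@[simp] lemma rep_mk (a : R) : rep q (mk q a) = freeRep q a := by simp [rep, mk]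

end

end Truncation

theorem stmt_18_general (q : ℤ) :
    mk q v * mk q y₁ ≠ mk q y₁ * mk q v := by
  intro h
  have hw : (Matrix.single 5 0 1 : Truncation.M) = Matrix.single 6 0 1 := by
    simpa [Truncation.V_mul_Y₁, Truncation.Y₁_mul_V] using congrArg (Truncation.rep q) h
  simpa using congrFun₂ hw 5 0

/-- For `q ≥ 2`, the images of `v` and `y₁` do not commute in `R/I`;
in particular the quotient algebra is non-commutative. -/
theorem stmt_18 (q : ℤ) (hq : 2 ≤ q) :
    mk q v * mk q y₁ ≠ mk q y₁ * mk q v :=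
  stmt_18_general q
end
end
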